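/- arXiv:2412.01968 — 5 statements merged into one kernel-verified Lean document; each statement's English description precedes it below -/
import Mathlib

section
/- If the exchange graph G(x, α(ε)) of an exchange x is acyclic, then x is ε-core-stable. -/
open Finset

/-- A valid exchange: a matrix with entries in `[0,1]`. -/
def IsExchange {n : ℕ} (x : Fin n → Fin n → ℝ) : Prop :=
  ∀ p q, x p q ∈ Set.Icc (0 : ℝ) 1

/-- The matrix `x` with `a` subtracted from entry `(j,i)` (i.e. `x − a·e_{ji}`). -/
def subEntry {n : ℕ} (x : Fin n → Fin n → ℝ) (j i : Fin n) (a : ℝ) :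
    Fin n → Fin n → ℝ :=
  fun p q => if p = j ∧ q = i then x p q - a else x p q

/-- `x` is `ε`-core-stable: no nonempty coalition `N'` has an exchange `x'`
supported on `N'` giving every member utility more than `u_i(x) + ε`. -/
def CoreStable {n : ℕ} (u : Fin n → (Fin n → Fin n → ℝ) → ℝ) (ε : ℝ)
    (x : Fin n → Fin n → ℝ) : Prop :=
  ¬ ∃ (N' : Finset (Fin n)) (x' : Fin n → Fin n → ℝ),
      N'.Nonempty ∧ IsExchange x' ∧
      (∀ p q, (p ∉ N' ∨ q ∉ N') → x' p q = 0) ∧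
      ∀ i ∈ N', u i x + ε < u i x'

/-- The exchange graph `G(x, α)` (edge `(i,j)` iff `x_{ij} < 1 − α`) is acyclic. -/
def AcyclicExchangeGraph {n : ℕ} (x : Fin n → Fin n → ℝ) (α : ℝ) : Prop :=
  ∀ i : Fin n, ¬ Relation.TransGen (fun p q : Fin n => x p q < 1 - α) i i

/-- `α(ε) = min_{j,i} inf_{x : x_{ji} = 1} max { a ∈ [0,1] : u_i(x − a·e_{ji}) ≥ u_i(x) − ε/n }`. -/
noncomputable def alphaEps {n : ℕ} (u : Fin n → (Fin n → Fin n → ℝ) → ℝ) (ε : ℝ) : ℝ :=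
  sInf { a : ℝ | ∃ (j i : Fin n) (x : Fin n → Fin n → ℝ),
    IsExchange x ∧ x j i = 1 ∧
    a = sSup { b : ℝ | b ∈ Set.Icc (0 : ℝ) 1 ∧
          u i x - ε / n ≤ u i (subEntry x j i b) } }

section Aux

variable {n : ℕ} (u : Fin n → (Fin n → Fin n → ℝ) → ℝ) (ε : ℝ)

lemma subEntry_isExchange {w : Fin n → Fin n → ℝ} (hw : IsExchange w) {j i : Fin n}
    (hji : w j i = 1) {b : ℝ} (hb : b ∈ Set.Icc (0 : ℝ) 1) :
    IsExchange (subEntry w j i b) := by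
  intro p q
  unfold subEntry
  split
  · next h =>
    obtain ⟨hp, hq⟩ := h
    subst hp; subst hq
    rw [hji]
    exact ⟨by linarith [hb.2], by linarith [hb.1]⟩
  · exact hw p q

lemma subEntry_mono {w : Fin n → Fin n → ℝ} {j i : Fin n} {a b : ℝ} (hab : a ≤ b) :
    ∀ p q, subEntry w j i b p q ≤ subEntry w j i a p q := by
  intro p q
  unfold subEntry
  split <;> linarith

/-- The key property of `alphaEps`: it lies in `[0,1]`, and subtracting it from any
full entry costs at most `ε/n` in utility. -/
lemma alphaEps_spec (hn : 0 < n) (hε : 0 < ε)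
    (hcont : ∀ i, ContinuousOn (u i) {x | IsExchange x})
    (hmono : ∀ i x y, (∀ p q, x p q ≤ y p q) → u i x ≤ u i y) :
    0 ≤ alphaEps u ε ∧ alphaEps u ε ≤ 1 ∧
      ∀ (j i : Fin n) (w : Fin n → Fin n → ℝ), IsExchange w → w j i = 1 →
        u i w - ε / n ≤ u i (subEntry w j i (alphaEps u ε)) := by
  have hεn : 0 ≤ ε / n := by positivity
  set S := { a : ℝ | ∃ (j i : Fin n) (x : Fin n → Fin n → ℝ),
    IsExchange x ∧ x j i = 1 ∧
    a = sSup { b : ℝ | b ∈ Set.Icc (0 : ℝ) 1 ∧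
          u i x - ε / n ≤ u i (subEntry x j i b) } } with hS
  -- basic facts about each B-set
  have hBfacts : ∀ (j i : Fin n) (w : Fin n → Fin n → ℝ), IsExchange w → w j i = 1 →
      (0 : ℝ) ∈ { b : ℝ | b ∈ Set.Icc (0 : ℝ) 1 ∧ u i w - ε / n ≤ u i (subEntry w j i b) } ∧
      BddAbove { b : ℝ | b ∈ Set.Icc (0 : ℝ) 1 ∧ u i w - ε / n ≤ u i (subEntry w j i b) } := by
    intro j i w hw hji
    constructor
    · refine ⟨⟨le_refl 0, zero_le_one⟩, ?_⟩
      have : subEntry w j i 0 = w := by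
        funext p q; unfold subEntry; split <;> ring_nf
      rw [this]; linarith
    · exact ⟨1, fun b hb => hb.1.2⟩
  -- every element of S is in [0,1]
  have hSmem : ∀ a ∈ S, 0 ≤ a ∧ a ≤ 1 := by
    rintro a ⟨j, i, w, hw, hji, rfl⟩
    obtain ⟨h0, hbdd⟩ := hBfacts j i w hw hji
    constructor
    · exact le_csSup hbdd h0
    · exact csSup_le ⟨0, h0⟩ fun b hb => hb.1.2
  -- S is nonempty
  have hi0 : Fin n := ⟨0, hn⟩
  have hone : IsExchange (fun _ _ : Fin n => (1 : ℝ)) := fun p q => ⟨zero_le_one, le_refl 1⟩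
  have hSne : S.Nonempty := ⟨_, hi0, hi0, (fun _ _ => 1), hone, rfl, rfl⟩
  have hSbdd : BddBelow S := ⟨0, fun a ha => (hSmem a ha).1⟩
  have hα0 : 0 ≤ alphaEps u ε := le_csInf hSne fun a ha => (hSmem a ha).1
  have hα1 : alphaEps u ε ≤ 1 := by
    obtain ⟨a, ha⟩ := hSne
    exact le_trans (csInf_le hSbdd ha) (hSmem a ha).2
  refine ⟨hα0, hα1, ?_⟩
  intro j i w hw hji
  set B := { b : ℝ | b ∈ Set.Icc (0 : ℝ) 1 ∧ u i w - ε / n ≤ u i (subEntry w j i b) } with hBdef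
  obtain ⟨h0B, hBbdd⟩ := hBfacts j i w hw hji
  have hBne : B.Nonempty := ⟨0, h0B⟩
  -- B is closed
  have hg : Continuous (fun b : ℝ => subEntry w j i b) := by
    refine continuous_pi fun p => continuous_pi fun q => ?_
    unfold subEntry
    by_cases h : p = j ∧ q = i
    · simp only [if_pos h]; exact continuous_const.sub continuous_id
    · simp only [if_neg h]; exact continuous_const
  have hf : ContinuousOn (fun b : ℝ => u i (subEntry w j i b)) (Set.Icc (0 : ℝ) 1) := by
    refine (hcont i).comp hg.continuousOn ?_
    intro b hb
    exact subEntry_isExchange hw hji hb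
  have hBclosed : IsClosed B := by
    have : B = Set.Icc (0 : ℝ) 1 ∩
        (fun b : ℝ => u i (subEntry w j i b)) ⁻¹' Set.Ici (u i w - ε / n) := by
      ext b; simp [hBdef, Set.mem_setOf_eq, and_comm]
    rw [this]
    exact hf.preimage_isClosed_of_isClosed isClosed_Icc isClosed_Ici
  -- sSup B ∈ B
  have hsup_mem : sSup B ∈ B := hBclosed.csSup_mem hBne hBbdd
  -- alphaEps ≤ sSup B
  have hαle : alphaEps u ε ≤ sSup B := csInf_le hSbdd ⟨j, i, w, hw, hji, rfl⟩
  -- conclude by monotonicity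
  have : u i (subEntry w j i (sSup B)) ≤ u i (subEntry w j i (alphaEps u ε)) :=
    hmono i _ _ (subEntry_mono hαle)
  exact le_trans hsup_mem.2 this

end Aux

/-- **Acyclicity of `G(x, α(ε))` implies `ε`-core-stability.** -/
theorem acyclic_exchange_graph_implies_core_stable (n : ℕ) (hn : 0 < n)
    (ε : ℝ) (hε : ε ∈ Set.Ioo (0 : ℝ) 1)
    (u : Fin n → (Fin n → Fin n → ℝ) → ℝ)
    (hcont : ∀ i, ContinuousOn (u i) {x | IsExchange x})
    (hmono : ∀ i x y, (∀ p q, x p q ≤ y p q) → u i x ≤ u i y)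
    (hbundle : ∀ i x y, (∀ j, x j i = y j i) → u i x = u i y)
    (hrange : ∀ i x, IsExchange x → u i x ∈ Set.Icc (0 : ℝ) 1)
    (x : Fin n → Fin n → ℝ) (hx : IsExchange x)
    (hacyc : AcyclicExchangeGraph x (alphaEps u ε)) :
    CoreStable u ε x := by
  obtain ⟨hε0, hε1⟩ := hε
  obtain ⟨hα0, hα1, hαkey⟩ := alphaEps_spec u ε hn hε0 hcont hmono
  set α := alphaEps u ε with hαdef
  rintro ⟨N', x', hN', hx', hsupp, hbeat⟩
  -- the transitive closure of the edge relation is well-founded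
  set r : Fin n → Fin n → Prop := fun p q => x p q < 1 - α with hr
  haveI : IsTrans (Fin n) (Relation.TransGen r) := ⟨fun _ _ _ => Relation.TransGen.trans⟩
  haveI : IsIrrefl (Fin n) (Relation.TransGen r) := ⟨fun a => hacyc a⟩
  have hwf : WellFounded (Relation.TransGen r) :=
    Finite.wellFounded_of_trans_of_irrefl _
  obtain ⟨i, hiN, hmin⟩ := hwf.has_min (↑N' : Set (Fin n)) (by exact_mod_cast hN')
  have hiN' : i ∈ N' := by exact_mod_cast hiN
  have hkey : ∀ j ∈ N', 1 - α ≤ x j i := by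
    intro j hj
    by_contra h
    exact hmin j (by exact_mod_cast hj) (Relation.TransGen.single (lt_of_not_ge h))
  -- the interpolation family
  set W : Finset (Fin n) → Fin n → Fin n → ℝ :=
    fun S p q => if q = i ∧ p ∈ N' then (if p ∈ S then 1 - α else 1) else x p q with hW
  have hWex : ∀ S : Finset (Fin n), IsExchange (W S) := by
    intro S p q
    simp only [hW]
    split
    · split
      · exact ⟨by linarith, by linarith⟩
      · exact ⟨zero_le_one, le_refl 1⟩
    · exact hx p q
  -- telescoping bound
  have htel : ∀ S : Finset (Fin n), S ⊆ N' →
      u i (W ∅) ≤ u i (W S) + S.card * (ε / n) := by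
    intro S
    induction S using Finset.induction_on with
    | empty => intro _; simp
    | insert _ _ hjS =>
      rename_i j S ih
      intro hsub
      have hjN : j ∈ N' := hsub (Finset.mem_insert_self j S)
      have hSN : S ⊆ N' := fun a ha => hsub (Finset.mem_insert_of_mem ha)
      have hWji : W S j i = 1 := by simp [hW, hjN, hjS]
      have heq : W (insert j S) = subEntry (W S) j i α := by
        funext p q
        simp only [subEntry, hW]
        by_cases hpj : p = j ∧ q = i
        · obtain ⟨rfl, rfl⟩ := hpj
          simp [hjN, hjS]
        · rw [if_neg hpj]
          by_cases hqi : q = i ∧ p ∈ N'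
          · rw [if_pos hqi, if_pos hqi]
            have hpne : p ≠ j := by
              intro hpe; exact hpj ⟨hpe, hqi.1⟩
            simp [Finset.mem_insert, hpne]
          · rw [if_neg hqi, if_neg hqi]
      have hstep : u i (W S) - ε / n ≤ u i (W (insert j S)) := by
        rw [heq]
        exact hαkey j i (W S) (hWex S) hWji
      have hcard : ((insert j S).card : ℝ) = S.card + 1 := by
        rw [Finset.card_insert_of_notMem hjS]; push_cast; ring
      have := ih hSN
      rw [hcard]
      have hεn : 0 ≤ ε / n := by positivity
      linarith
  -- final comparisons
  have hWN'le : u i (W N') ≤ u i x := by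
    refine hmono i _ _ ?_
    intro p q
    simp only [hW]
    by_cases h : q = i ∧ p ∈ N'
    · rw [if_pos h, if_pos h.2, h.1]
      exact hkey p h.2
    · rw [if_neg h]
  have hx'le : u i x' ≤ u i (W ∅) := by
    have hb : u i x' = u i (fun p q => if q = i then x' p q else W ∅ p q) := by
      refine hbundle i _ _ ?_
      intro j; simp
    rw [hb]
    refine hmono i _ _ ?_
    intro p q
    simp only [hW, Finset.notMem_empty, if_false]
    by_cases hq : q = i
    · rw [if_pos hq]
      by_cases hp : p ∈ N'
      · rw [if_pos ⟨hq, hp⟩]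
        exact (hx' p q).2
      · rw [if_neg (fun h => hp h.2), hsupp p q (Or.inl hp)]
        exact (hx p q).1
    · rw [if_neg hq, if_neg (fun h => hq h.1)]
  have hcardle : (N'.card : ℝ) * (ε / n) ≤ ε := by
    have h1 : (N'.card : ℝ) ≤ n := by
      exact_mod_cast Finset.card_le_card (Finset.subset_univ N') |>.trans_eq (by simp)
    have hεn : 0 < ε / n := by positivity
    have : (N'.card : ℝ) * (ε / n) ≤ n * (ε / n) := by nlinarith
    have hne : (n : ℝ) ≠ 0 := by positivity
    calc (N'.card : ℝ) * (ε / n) ≤ n * (ε / n) := this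
      _ = ε := by field_simp
  have hfin := htel N' (le_refl N')
  have hbeati := hbeat i hiN'
  linarith
end

section
/- For every z ∈ Z, the exchange graph G(f(z), α) is acyclic, where f(z)_{ij} = 1 − exp(−z_{ij}); consequently, for every z ∈ Z the exchange f(z) is ε-core-stable. -/
open Finset

/-- The set `Z ⊆ [0,M]^{n×n}` of points whose entries along every directed cycle
sum to at least `n·log(1/α)`. -/
def Zset (n : ℕ) (M α : ℝ) : Set (Fin n → Fin n → ℝ) :=
  { z | (∀ i j, z i j ∈ Set.Icc (0 : ℝ) M) ∧
    ∀ (k : ℕ) (γ : Fin (k + 1) → Fin n), Function.Injective γ →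
      (n : ℝ) * Real.log (1 / α) ≤ ∑ j : Fin (k + 1), z (γ j) (γ (j + 1)) }

/-- The map `f(z)_{ij} = 1 − exp(−z_{ij})`. -/
noncomputable def fMap {n : ℕ} (z : Fin n → Fin n → ℝ) : Fin n → Fin n → ℝ :=
  fun i j => 1 - Real.exp (-(z i j))

/-! ### Auxiliary lemmas -/

lemma fin_add_one_val {k : ℕ} (j : Fin (k + 1)) :
    ((j + 1 : Fin (k + 1))).val = if j.val = k then 0 else j.val + 1 := by
  have h1 : (1 : Fin (k + 1)).val = 1 % (k + 1) := rfl
  rw [Fin.add_def, h1]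
  rcases Nat.eq_zero_or_pos k with rfl | hk
  · have : j.val = 0 := by have := j.isLt; omega
    simp [this, Nat.mod_one]
  · have h2 : 1 % (k + 1) = 1 := Nat.mod_eq_of_lt (by omega)
    rw [h2]
    by_cases hj : j.val = k
    · simp [hj, Nat.mod_self]
    · have hlt : j.val + 1 < k + 1 := by have := j.isLt; omega
      rw [if_neg hj]
      simp [Nat.mod_eq_of_lt hlt]

lemma exists_path' {β : Type*} {r : β → β → Prop} {a b : β} (h : Relation.TransGen r a b) :
    ∃ (m : ℕ) (γ : Fin (m + 2) → β), γ 0 = a ∧ γ (Fin.last (m + 1)) = b ∧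
      ∀ j : Fin (m + 1), r (γ j.castSucc) (γ j.succ) := by
  induction h with
  | @single c h =>
      refine ⟨0, ![a, c], rfl, rfl, ?_⟩
      intro j; fin_cases j; simpa using h
  | @tail b c hab hbc ih =>
      obtain ⟨m, γ, h0, hl, he⟩ := ih
      refine ⟨m + 1, Fin.snoc γ c, ?_, ?_, ?_⟩
      · have e : (0 : Fin (m + 3)) = Fin.castSucc 0 := by apply Fin.ext; simp
        rw [e, Fin.snoc_castSucc, h0]
      · rw [Fin.snoc_last]
      · intro j
        induction j using Fin.lastCases with
        | last =>
            rw [Fin.succ_last, Fin.snoc_last, Fin.snoc_castSucc, hl]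
            exact hbc
        | cast i =>
            rw [Fin.succ_castSucc, Fin.snoc_castSucc, Fin.snoc_castSucc]
            exact he i

lemma exists_cycle' {β : Type*} {r : β → β → Prop} {a : β} (h : Relation.TransGen r a a) :
    ∃ (m : ℕ) (γ : Fin (m + 1) → β), ∀ j : Fin (m + 1), r (γ j) (γ (j + 1)) := by
  obtain ⟨m, γ, h0, hl, he⟩ := exists_path' h
  refine ⟨m, fun j => γ ⟨j.val, Nat.lt_succ_of_lt j.isLt⟩, fun j => ?_⟩
  show r (γ ⟨j.val, Nat.lt_succ_of_lt j.isLt⟩)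
      (γ ⟨(j + 1 : Fin (m + 1)).val, Nat.lt_succ_of_lt (j + 1).isLt⟩)
  have hj := he ⟨j.val, j.isLt⟩
  rw [Fin.castSucc_mk, Fin.succ_mk] at hj
  by_cases hjm : j.val = m
  · have e2 : (⟨j.val + 1, by omega⟩ : Fin (m + 2)) = Fin.last (m + 1) := by
      apply Fin.ext; simp [hjm]
    rw [e2, hl, ← h0] at hj
    convert hj using 2
    apply Fin.ext
    simp only [Fin.val_mk, fin_add_one_val, Fin.val_zero]
    simp [hjm]
  · convert hj using 2
    apply Fin.ext
    simp only [Fin.val_mk, fin_add_one_val]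
    simp [hjm]

lemma exists_simple_cycle' {n : ℕ} {r : Fin n → Fin n → Prop} {a : Fin n}
    (h : Relation.TransGen r a a) :
    ∃ (m : ℕ) (γ : Fin (m + 1) → Fin n), Function.Injective γ ∧
      ∀ j : Fin (m + 1), r (γ j) (γ (j + 1)) := by
  classical
  have hex : ∃ m : ℕ, ∃ γ : Fin (m + 1) → Fin n, ∀ j, r (γ j) (γ (j + 1)) := by
    obtain ⟨m, γ, hγ⟩ := exists_cycle' h; exact ⟨m, γ, hγ⟩
  have hspec := Nat.find_spec hex
  set m₀ := Nat.find hex with hm₀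
  obtain ⟨γ, hγ⟩ := hspec
  refine ⟨m₀, γ, ?_, hγ⟩
  by_contra hinj
  simp only [Function.Injective, not_forall] at hinj
  obtain ⟨A, B, hAB, hne⟩ := hinj
  set γ' : Fin (m₀ + 1) → Fin n := fun j => γ (j + A) with hγ'def
  have hγ' : ∀ j : Fin (m₀ + 1), r (γ' j) (γ' (j + 1)) := by
    intro j
    have hco : (j + 1) + A = (j + A) + 1 := by exact add_right_comm j 1 A
    simp only [hγ'def, hco]
    exact hγ (j + A)
  set d : Fin (m₀ + 1) := B - A with hd
  have hdne : d ≠ 0 := sub_ne_zero.mpr (Ne.symm hne)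
  have hdpos : 1 ≤ d.val := by
    rcases Nat.eq_zero_or_pos d.val with h0 | h0
    · exact absurd (Fin.ext h0) hdne
    · omega
  have hdle : d.val ≤ m₀ := Nat.lt_succ_iff.mp d.isLt
  have hcyc0 : γ' 0 = γ' d := by
    simp only [hγ'def, zero_add, hd, sub_add_cancel, hAB]
  set t := d.val - 1 with ht
  have htd : t + 1 = d.val := by omega
  have htm : t < m₀ := by omega
  have hδ : ∃ δ : Fin (t + 1) → Fin n, ∀ j, r (δ j) (δ (j + 1)) := by
    refine ⟨fun j => γ' ⟨j.val, by have := j.isLt; omega⟩, fun j => ?_⟩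
    show r (γ' ⟨j.val, by have := j.isLt; omega⟩)
        (γ' ⟨(j + 1 : Fin (t + 1)).val, by have := (j + 1 : Fin (t + 1)).isLt; omega⟩)
    by_cases hjt : j.val = t
    · have hedge := hγ' ⟨t, by omega⟩
      have e3 : ((⟨t, by omega⟩ : Fin (m₀ + 1)) + 1) = d := by
        apply Fin.ext
        rw [fin_add_one_val]
        simp only [Fin.val_mk]
        rw [if_neg (by omega)]
        omega
      rw [e3, ← hcyc0] at hedge
      convert hedge using 2
      · apply Fin.ext; simpa using hjt
      · apply Fin.ext
        simp only [Fin.val_mk, fin_add_one_val, Fin.val_zero]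
        simp [hjt]
    · have hjlt : j.val < t := by have := j.isLt; omega
      have hedge := hγ' ⟨j.val, by omega⟩
      convert hedge using 2
      apply Fin.ext
      simp only [Fin.val_mk, fin_add_one_val]
      rw [if_neg hjt, if_neg (by omega)]
  exact Nat.find_min hex htm hδ

/-- Auxiliary matrix: entries `1 - α` in column `i` on rows in `S`, and otherwise the
"everything from `N'`" matrix. -/
def colSet (n : ℕ) (N' S : Finset (Fin n)) (i : Fin n) (α : ℝ) : Fin n → Fin n → ℝ :=
  fun p q => if q = i ∧ p ∈ S then 1 - α else if p ∈ N' then 1 else 0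

lemma subEntry_zero {n : ℕ} (x : Fin n → Fin n → ℝ) (j i : Fin n) :
    subEntry x j i 0 = x := by
  funext p q; simp [subEntry]

lemma alpha_removal {n : ℕ} (hn : 0 < n) {ε : ℝ} (hε : ε ∈ Set.Ioo (0 : ℝ) 1)
    (u : Fin n → (Fin n → Fin n → ℝ) → ℝ)
    (hcont : ∀ i, ContinuousOn (u i) {x | IsExchange x})
    (hmono : ∀ i x y, (∀ p q, x p q ≤ y p q) → u i x ≤ u i y) :
    ∀ (j i : Fin n) (x : Fin n → Fin n → ℝ), IsExchange x → x j i = 1 →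
      alphaEps u ε ≤ 1 ∧ u i x - ε / n ≤ u i (subEntry x j i (alphaEps u ε)) := by
  have hn' : (0 : ℝ) < n := by exact_mod_cast hn
  have hεn : 0 < ε / n := div_pos hε.1 hn'
  have hAlb : ∀ a ∈ { a : ℝ | ∃ (j i : Fin n) (x : Fin n → Fin n → ℝ),
      IsExchange x ∧ x j i = 1 ∧
      a = sSup { b : ℝ | b ∈ Set.Icc (0 : ℝ) 1 ∧
            u i x - ε / n ≤ u i (subEntry x j i b) } }, 0 ≤ a := by
    rintro a ⟨j, i, x, hx, hx1, rfl⟩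
    apply le_csSup ⟨1, fun b hb => hb.1.2⟩
    refine ⟨⟨le_refl 0, zero_le_one⟩, ?_⟩
    rw [subEntry_zero]
    linarith
  intro j i x hx hx1
  set S := { b : ℝ | b ∈ Set.Icc (0 : ℝ) 1 ∧ u i x - ε / n ≤ u i (subEntry x j i b) }
    with hSdef
  have hS0 : (0 : ℝ) ∈ S := by
    refine ⟨⟨le_refl 0, zero_le_one⟩, ?_⟩
    rw [subEntry_zero]
    linarith
  have hSbdd : BddAbove S := ⟨1, fun b hb => hb.1.2⟩
  have hSclosed : IsClosed S := by
    have hg : Continuous (fun b : ℝ => subEntry x j i b) := by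
      apply continuous_pi; intro p; apply continuous_pi; intro q
      simp only [subEntry]
      by_cases h : p = j ∧ q = i
      · simp only [if_pos h]; fun_prop
      · simp only [if_neg h]; fun_prop
    have hmap : Set.MapsTo (fun b : ℝ => subEntry x j i b) (Set.Icc 0 1)
        {x | IsExchange x} := by
      intro b hb
      intro p q
      simp only [subEntry]
      by_cases h : p = j ∧ q = i
      · rw [if_pos h]
        obtain ⟨rfl, rfl⟩ := h
        rw [hx1]
        exact ⟨by linarith [hb.2], by linarith [hb.1]⟩
      · rw [if_neg h]; exact hx p q
    have hcont' : ContinuousOn (fun b : ℝ => u i (subEntry x j i b)) (Set.Icc 0 1) :=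
      (hcont i).comp hg.continuousOn hmap
    have hSeq : S = Set.Icc (0 : ℝ) 1 ∩
        (fun b : ℝ => u i (subEntry x j i b)) ⁻¹' Set.Ici (u i x - ε / n) := by
      ext b
      simp only [hSdef, Set.mem_setOf_eq, Set.mem_inter_iff, Set.mem_preimage, Set.mem_Ici]
    rw [hSeq]
    exact hcont'.preimage_isClosed_of_isClosed isClosed_Icc isClosed_Ici
  have hsmem : sSup S ∈ S := hSclosed.csSup_mem ⟨0, hS0⟩ hSbdd
  have hαle : alphaEps u ε ≤ sSup S := by
    apply csInf_le ⟨0, hAlb⟩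
    exact ⟨j, i, x, hx, hx1, rfl⟩
  refine ⟨hαle.trans hsmem.1.2, ?_⟩
  calc u i x - ε / n ≤ u i (subEntry x j i (sSup S)) := hsmem.2
    _ ≤ u i (subEntry x j i (alphaEps u ε)) := by
        apply hmono
        intro p q
        simp only [subEntry]
        split_ifs
        · linarith
        · exact le_rfl

/-- **For every `z ∈ Z`, the exchange graph `G(f(z), α(ε))` is acyclic, and
consequently the exchange `f(z)` is `ε`-core-stable.** -/
theorem Zset_maps_to_core_stable (n : ℕ) (hn : 0 < n)
    (ε : ℝ) (hε : ε ∈ Set.Ioo (0 : ℝ) 1)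
    (u : Fin n → (Fin n → Fin n → ℝ) → ℝ)
    (hcont : ∀ i, ContinuousOn (u i) {x | IsExchange x})
    (hmono : ∀ i x y, (∀ p q, x p q ≤ y p q) → u i x ≤ u i y)
    (hbundle : ∀ i x y, (∀ j, x j i = y j i) → u i x = u i y)
    (hrange : ∀ i x, IsExchange x → u i x ∈ Set.Icc (0 : ℝ) 1)
    (hαpos : 0 < alphaEps u ε)
    (M c : ℝ) (hc : 1 < c)
    (hM : c * n * Real.log (1 / alphaEps u ε) < M)
    (z : Fin n → Fin n → ℝ) (hz : z ∈ Zset n M (alphaEps u ε)) :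
    AcyclicExchangeGraph (fMap z) (alphaEps u ε) ∧ CoreStable u ε (fMap z) := by
  classical
  have hn' : (0 : ℝ) < n := by exact_mod_cast hn
  have hεn : 0 < ε / n := div_pos hε.1 hn'
  set α := alphaEps u ε with hαdef
  have key := alpha_removal hn hε u hcont hmono
  have hα1 : α ≤ 1 :=
    (key ⟨0, hn⟩ ⟨0, hn⟩ (fun _ _ => 1) (fun p q => ⟨zero_le_one, le_rfl⟩) rfl).1
  have hα0 : 0 ≤ α := le_of_lt hαpos
  -- Part 1: acyclicity
  have hacyc : AcyclicExchangeGraph (fMap z) α := by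
    intro i hi
    obtain ⟨m, γ, hγinj, hγ⟩ := exists_simple_cycle' hi
    have hcard : m + 1 ≤ n := by
      have := Fintype.card_le_of_injective γ hγinj
      simpa using this
    have hL : (0 : ℝ) ≤ Real.log (1 / α) :=
      Real.log_nonneg (by rw [le_div_iff₀ hαpos]; linarith)
    have hedge : ∀ j : Fin (m + 1), z (γ j) (γ (j + 1)) < Real.log (1 / α) := by
      intro j
      have h := hγ j
      have h2 : α < Real.exp (-(z (γ j) (γ (j + 1)))) := by
        simp only [fMap] at h; linarith
      have h3 := Real.log_lt_log hαpos h2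
      rw [Real.log_exp] at h3
      rw [one_div, Real.log_inv]
      linarith
    have hsum := hz.2 m γ hγinj
    have hlt : ∑ j : Fin (m + 1), z (γ j) (γ (j + 1)) <
        ((m + 1 : ℕ) : ℝ) * Real.log (1 / α) := by
      calc ∑ j : Fin (m + 1), z (γ j) (γ (j + 1))
          < ∑ _j : Fin (m + 1), Real.log (1 / α) :=
            Finset.sum_lt_sum_of_nonempty Finset.univ_nonempty (fun j _ => hedge j)
        _ = ((m + 1 : ℕ) : ℝ) * Real.log (1 / α) := by
            rw [Finset.sum_const, Finset.card_univ, Fintype.card_fin, nsmul_eq_mul]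
    have hle : ((m + 1 : ℕ) : ℝ) * Real.log (1 / α) ≤ (n : ℝ) * Real.log (1 / α) := by
      apply mul_le_mul_of_nonneg_right _ hL
      exact_mod_cast hcard
    linarith
  refine ⟨hacyc, ?_⟩
  -- Part 2: core stability
  rintro ⟨N', x', hNne, hx'ex, hzero, himp⟩
  obtain ⟨j₀, hj₀⟩ := hNne
  have hacyc' : ∀ i : Fin n,
      ¬ Relation.TransGen (fun p q : Fin n => fMap z p q < 1 - α) i i := hacyc
  -- find a "sink" in the coalition: a member receiving at least `1 - α` from
  -- every coalition member
  haveI : IsTrans {y // y ∈ N'}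
      (Relation.TransGen fun a b : {y // y ∈ N'} => fMap z ↑a ↑b < 1 - α) :=
    ⟨fun _ _ _ h1 h2 => h1.trans h2⟩
  haveI : IsIrrefl {y // y ∈ N'}
      (Relation.TransGen fun a b : {y // y ∈ N'} => fMap z ↑a ↑b < 1 - α) := by
    constructor
    intro a ha
    exact hacyc' ↑a
      (Relation.TransGen.lift (fun y : {y // y ∈ N'} => (↑y : Fin n)) (fun _ _ h => h) _ _ ha)
  have hwf := Finite.wellFounded_of_trans_of_irrefl
      (Relation.TransGen fun a b : {y // y ∈ N'} => fMap z ↑a ↑b < 1 - α)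
  obtain ⟨⟨i', hi'mem⟩, -, hmin⟩ := hwf.has_min Set.univ ⟨⟨j₀, hj₀⟩, trivial⟩
  have hsink : ∀ p ∈ N', ¬ (fMap z p i' < 1 - α) := fun p hp hrp =>
    hmin ⟨p, hp⟩ trivial (Relation.TransGen.single hrp)
  -- the comparison chain
  have hF_ex : ∀ S : Finset (Fin n), IsExchange (colSet n N' S i' α) := by
    intro S p q
    simp only [colSet]
    split_ifs
    · exact ⟨by linarith, by linarith⟩
    · exact ⟨zero_le_one, le_rfl⟩
    · exact ⟨le_rfl, zero_le_one⟩
  have h1 : u i' x' ≤ u i' (colSet n N' ∅ i' α) := by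
    apply hmono
    intro p q
    simp only [colSet, Finset.notMem_empty, and_false, if_false]
    by_cases h : p ∈ N'
    · rw [if_pos h]; exact (hx'ex p q).2
    · rw [if_neg h, hzero p q (Or.inl h)]
  have claim : ∀ S : Finset (Fin n), S ⊆ N' →
      u i' (colSet n N' ∅ i' α) - S.card * (ε / n) ≤ u i' (colSet n N' S i' α) := by
    intro S
    induction S using Finset.induction_on with
    | empty => intro _; simp
    | @insert p S hp ih =>
        intro hsub
        have hpN : p ∈ N' := hsub (Finset.mem_insert_self p S)
        have hSsub : S ⊆ N' := fun y hy => hsub (Finset.mem_insert_of_mem hy)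
        have hFS1 : colSet n N' S i' α p i' = 1 := by
          simp [colSet, hp, hpN]
        have hk := (key p i' (colSet n N' S i' α) (hF_ex S) hFS1).2
        have heq : subEntry (colSet n N' S i' α) p i' α
            = colSet n N' (insert p S) i' α := by
          funext p' q'
          by_cases hq : q' = i'
          · by_cases hpp : p' = p
            · subst hq; subst hpp
              simp [subEntry, colSet, hp, hpN]
            · simp [subEntry, colSet, hq, hpp]
          · simp [subEntry, colSet, hq]
        rw [heq] at hk
        have hih := ih hSsub
        rw [Finset.card_insert_of_notMem hp]
        push_cast
        linarith
  have hclaim := claim N' (subset_refl N')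
  have hcard : (N'.card : ℝ) ≤ (n : ℝ) := by
    exact_mod_cast le_trans (Finset.card_le_univ N') (le_of_eq (Finset.card_fin n))
  have h2 : (N'.card : ℝ) * (ε / n) ≤ ε := by
    have hc2 : (N'.card : ℝ) * (ε / n) ≤ (n : ℝ) * (ε / n) :=
      mul_le_mul_of_nonneg_right hcard hεn.le
    have hc3 : (n : ℝ) * (ε / n) = ε := by field_simp
    linarith
  have h3 : u i' (colSet n N' N' i' α) ≤ u i' (fMap z) := by
    have hb := hbundle i' (colSet n N' N' i' α)
        (fun p q => if q = i' then colSet n N' N' i' α p q else fMap z p q)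
        (fun j => by simp)
    rw [hb]
    apply hmono
    intro p q
    by_cases hq : q = i'
    · subst hq
      rw [if_pos rfl]
      by_cases hpN : p ∈ N'
      · have hcv : colSet n N' N' q α p q = 1 - α := by simp [colSet, hpN]
        rw [hcv]
        exact not_lt.mp (hsink p hpN)
      · have hcv : colSet n N' N' q α p q = 0 := by simp [colSet, hpN]
        rw [hcv]
        have hz0 : 0 ≤ z p q := (hz.1 p q).1
        have hexp : Real.exp (-(z p q)) ≤ 1 := Real.exp_le_one_iff.mpr (by linarith)
        simp only [fMap]
        linarith
    · simp [hq]
  have himp' := himp i' hi'mem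
  linarith [h1, hclaim, h2, h3, himp']
end

section
/- Suppose g : Z → Z is continuous on the nonempty compact convex set Z, and g is given by g(z) = (1/n²)∑_{i,j} g^{ij}(z) with g^{ij}(z)_{ij} − z_{ij} = (δ/n²)·β_{ij}(z)·(Δ_j(f(z)) − Δ_i(f(z))) and g^{ij} changes only coordinate (i,j). If z* is a fixed point of g and β_{ij}(z*) > 0 for all i,j with Δ_i(f(z*)) ≠ Δ_j(f(z*)), and ∑_i Δ_i(f(z*)) = 0, then Δ_i(f(z*)) = 0 for all i, i.e., f(z*) is a reciprocal exchange. -/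
open Finset

/-- **Fixed points of `g` yield reciprocal exchanges.**
If `g(z) = (1/n²)∑_{i,j} g^{ij}(z)`, each `g^{ij}` changes only coordinate
`(i,j)`, with `g^{ij}(z)_{ij} − z_{ij} = (δ/n²)·β_{ij}(z)·(Δ_j(f z) − Δ_i(f z))`,
then at a fixed point `zs` of `g` where `β_{ij}(zs) > 0` whenever
`Δ_i(f zs) ≠ Δ_j(f zs)`, and `∑_i Δ_i(f zs) = 0`, all surpluses vanish:
`Δ_i(f zs) = 0` for all `i`, i.e. `f zs` is reciprocal. -/
theorem fixed_point_gives_reciprocal (n : ℕ) (hn : 0 < n)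
    (g : (Fin n → Fin n → ℝ) → (Fin n → Fin n → ℝ))
    (gij : Fin n → Fin n → (Fin n → Fin n → ℝ) → (Fin n → Fin n → ℝ))
    (β : Fin n → Fin n → (Fin n → Fin n → ℝ) → ℝ)
    (f : (Fin n → Fin n → ℝ) → (Fin n → Fin n → ℝ))
    (Δ : Fin n → (Fin n → Fin n → ℝ) → ℝ)
    (δ : ℝ) (hδ : 0 < δ)
    (hg : ∀ z p q, g z p q = (1 / (n : ℝ) ^ 2) * ∑ i : Fin n, ∑ j : Fin n, gij i j z p q)
    (hcoord : ∀ i j z,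
      gij i j z i j - z i j = (δ / (n : ℝ) ^ 2) * β i j z * (Δ j (f z) - Δ i (f z)))
    (hoff : ∀ i j z p q, ¬(p = i ∧ q = j) → gij i j z p q = z p q)
    (zs : Fin n → Fin n → ℝ) (hfix : g zs = zs)
    (hβ : ∀ i j : Fin n, Δ i (f zs) ≠ Δ j (f zs) → 0 < β i j zs)
    (hsum : ∑ i : Fin n, Δ i (f zs) = 0) :
    ∀ i : Fin n, Δ i (f zs) = 0 := by

  have hn2 : ((n:ℝ)^2) ≠ 0 := by positivity
  have key : ∀ p q : Fin n,
      (δ / (n:ℝ)^2) * β p q zs * (Δ q (f zs) - Δ p (f zs)) = 0 := by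
    intro p q
    have h := congrFun (congrFun hfix p) q
    rw [hg] at h
    have hS : ∑ i : Fin n, ∑ j : Fin n, (gij i j zs p q - zs p q)
        = gij p q zs p q - zs p q := by
      rw [Finset.sum_eq_single p]
      · rw [Finset.sum_eq_single q]
        · intro b _ hb
          rw [hoff p b zs p q (by tauto)]; ring
        · intro hq; exact absurd (Finset.mem_univ q) hq
      · intro b _ hb
        apply Finset.sum_eq_zero; intro j _
        rw [hoff b j zs p q (by tauto)]; ring
      · intro hp; exact absurd (Finset.mem_univ p) hp
    have hS2 : ∑ i : Fin n, ∑ j : Fin n, (gij i j zs p q - zs p q)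
        = (∑ i : Fin n, ∑ j : Fin n, gij i j zs p q) - (n:ℝ)^2 * zs p q := by
      simp [Finset.sum_sub_distrib, Finset.card_univ]
      ring
    have hSeq : (∑ i : Fin n, ∑ j : Fin n, gij i j zs p q) = (n:ℝ)^2 * zs p q := by
      field_simp at h
      linarith
    have h0 : gij p q zs p q - zs p q = 0 := by
      rw [← hS, hS2, hSeq]; ring
    rw [← hcoord p q zs]; exact h0
  have heq : ∀ p q : Fin n, Δ p (f zs) = Δ q (f zs) := by
    intro p q
    by_contra hne'
    have hb := hβ p q hne'
    have hk := key p q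
    have h1 : 0 < δ / (n:ℝ)^2 := by positivity
    have hz : Δ q (f zs) - Δ p (f zs) = 0 := by
      rcases mul_eq_zero.mp hk with h | h
      · rcases mul_eq_zero.mp h with h | h <;> nlinarith
      · exact h
    exact hne' (by linarith)
  intro i
  have hall : ∑ j : Fin n, Δ j (f zs) = (n:ℝ) * Δ i (f zs) := by
    rw [Finset.sum_congr rfl (fun j _ => heq j i)]
    simp [Finset.card_univ, mul_comm]
  have : (n:ℝ) * Δ i (f zs) = 0 := by rw [← hall]; exact hsum
  have hnn : (n:ℝ) ≠ 0 := by positivity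
  exact (mul_eq_zero.mp this).resolve_left hnn
end

section
/- Let S ⊊ N with min_{i∈S} Δ_i(x) > max_{i∈N∖S} Δ_i(x) and ∑_{i∈S} Δ_i(x) > ε/n (in particular max_i Δ_i(x) > ε/n). Then ∑_{i∈S} ∑_{j∈N∖S} ψ_{ij}(x) > ε/n, and hence there exists j ∈ N∖S with ∑_{i∈S} ψ_{ij}(x) > ε/n². -/
open Finset

/-- **Substantial utility flow out of the high-surplus set.**
With nonnegative shares `ψ_{ij}`, utilities `u_i = ∑_j ψ_{ji}` (efficiency)
and surpluses `Δ_i = ∑_j ψ_{ij} − u_i`, if `S ⊊ N` separates surpluses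
(`min_S Δ > max_{N∖S} Δ`) and `∑_{i∈S} Δ_i > ε/n`, then
`∑_{i∈S} ∑_{j∉S} ψ_{ij} > ε/n`, and hence some `j ∉ S` has
`∑_{i∈S} ψ_{ij} > ε/n²`. -/
theorem high_surplus_outflow (n : ℕ) (hn : 0 < n) (ε : ℝ) (hε : 0 < ε)
    (ψ : Fin n → Fin n → ℝ) (hψ : ∀ i j, 0 ≤ ψ i j)
    (S : Finset (Fin n)) (hSne : S.Nonempty) (hSproper : S ≠ Finset.univ)
    (hsep : ∀ i ∈ S, ∀ j ∉ S,
      (∑ k : Fin n, ψ j k - ∑ k : Fin n, ψ k j) <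
        (∑ k : Fin n, ψ i k - ∑ k : Fin n, ψ k i))
    (hSsum : ε / n <
      ∑ i ∈ S, (∑ k : Fin n, ψ i k - ∑ k : Fin n, ψ k i)) :
    (ε / n < ∑ i ∈ S, ∑ j ∈ Sᶜ, ψ i j) ∧
    ∃ j ∉ S, ε / n ^ 2 < ∑ i ∈ S, ψ i j := by
  have key : ∑ i ∈ S, (∑ k : Fin n, ψ i k - ∑ k : Fin n, ψ k i)
      = ∑ i ∈ S, ∑ j ∈ Sᶜ, ψ i j - ∑ i ∈ S, ∑ j ∈ Sᶜ, ψ j i := by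
    have h1 : ∀ i : Fin n, ∑ k : Fin n, ψ i k = ∑ k ∈ S, ψ i k + ∑ k ∈ Sᶜ, ψ i k := by
      intro i
      rw [← Finset.sum_add_sum_compl S]
    have h2 : ∀ i : Fin n, ∑ k : Fin n, ψ k i = ∑ k ∈ S, ψ k i + ∑ k ∈ Sᶜ, ψ k i := by
      intro i
      rw [← Finset.sum_add_sum_compl S]
    simp only [h1, h2]
    have hc : ∑ i ∈ S, ∑ k ∈ S, ψ i k = ∑ i ∈ S, ∑ k ∈ S, ψ k i := Finset.sum_comm
    rw [Finset.sum_sub_distrib, Finset.sum_add_distrib, Finset.sum_add_distrib]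
    linarith
  have hnonneg : 0 ≤ ∑ i ∈ S, ∑ j ∈ Sᶜ, ψ j i :=
    Finset.sum_nonneg fun i _ => Finset.sum_nonneg fun j _ => hψ j i
  have hmain : ε / n < ∑ i ∈ S, ∑ j ∈ Sᶜ, ψ i j := by
    rw [key] at hSsum; linarith
  refine ⟨hmain, ?_⟩
  by_contra hcon
  push_neg at hcon
  have hle : ∑ j ∈ Sᶜ, ∑ i ∈ S, ψ i j ≤ (Sᶜ.card : ℝ) * (ε / n ^ 2) := by
    calc ∑ j ∈ Sᶜ, ∑ i ∈ S, ψ i j ≤ ∑ _j ∈ Sᶜ, (ε / n ^ 2) :=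
          Finset.sum_le_sum fun j hj => hcon j (Finset.mem_compl.mp hj)
      _ = (Sᶜ.card : ℝ) * (ε / n ^ 2) := by rw [Finset.sum_const, nsmul_eq_mul]
  have hcard : (Sᶜ.card : ℝ) ≤ n := by
    have := Finset.card_le_card (Finset.subset_univ Sᶜ)
    simpa using (Nat.cast_le (α := ℝ)).mpr this
  have hpos : (0:ℝ) < n := Nat.cast_pos.mpr hn
  have hεn2 : 0 ≤ ε / n ^ 2 := by positivity
  have : ∑ j ∈ Sᶜ, ∑ i ∈ S, ψ i j ≤ (n : ℝ) * (ε / n ^ 2) :=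
    hle.trans (mul_le_mul_of_nonneg_right hcard hεn2)
  rw [Finset.sum_comm] at this
  have heq : (n : ℝ) * (ε / n ^ 2) = ε / n := by field_simp
  linarith [hmain, this, heq ▸ this]
end

section
/- Let x, x' be exchanges and S ⊆ N with |S| < n such that: (a) min_{i∈S} Δ_i(z) ≥ max_{i∈N∖S} Δ_i(z) for z ∈ {x, x'}; (b) Δ_i(x) ≥ Δ_i(x') for all i ∈ S; (c) with h₁ = ∑_{i∈S}(Δ_i(x) − Δ_i(x')) and h₂ = ∑_{i∈N∖S} max(0, Δ_i(x') − Δ_i(x)), one has h₁ ≥ 2h₂/(nL/ε)². Then P(x') ≤ P(x) − (h₁/2)·(nL/ε)², where P(y) = ∑_{i=1}^n (nL/ε)^{2(n−i)}·Δ_{σ(i)}(y) and σ sorts surpluses in non-increasing order. -/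
open Finset

private lemma pd_strictMono_le {m : ℕ} (f : Fin m → ℕ) (hf : StrictMono f) (k : Fin m) :
    (k : ℕ) ≤ f k := by
  have H : ∀ j : ℕ, ∀ k : Fin m, (k : ℕ) = j → j ≤ f k := by
    intro j
    induction j with
    | zero => intro k _; exact Nat.zero_le _
    | succ j ih =>
      intro k hk
      have hkm := k.isLt
      have hjm : j < m := by omega
      have hlt : (⟨j, hjm⟩ : Fin m) < k := by
        rw [Fin.lt_def]; simp; omega
      have h1 : j ≤ f ⟨j, hjm⟩ := ih ⟨j, hjm⟩ rfl
      have h2 := hf hlt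
      omega
  exact H _ k rfl

private lemma pd_topsum {n : ℕ} (g : Fin n → ℝ) (hg : ∀ a b : Fin n, a ≤ b → g b ≤ g a)
    (U : Finset (Fin n)) (b : Fin n) (hU : U.card = (b : ℕ)) :
    ∑ j ∈ U, g j ≤ ∑ j ∈ Finset.Iio b, g j := by
  have e := U.orderIsoOfFin hU
  have h1 : ∑ j ∈ U, g j = ∑ k : Fin (b : ℕ), g (e k) := by
    rw [← Finset.sum_coe_sort U g]
    exact (Equiv.sum_comp e.toEquiv (fun x : {x // x ∈ U} => g x)).symm
  have h2 : ∑ j ∈ Finset.Iio b, g j = ∑ k : Fin (b : ℕ), g (Fin.castLE b.isLt.le k) := by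
    refine (Finset.sum_bij (fun (k : Fin (b : ℕ)) (_ : k ∈ Finset.univ) =>
      Fin.castLE b.isLt.le k) ?_ ?_ ?_ ?_).symm
    · intro k _
      rw [Finset.mem_Iio, Fin.lt_def]
      exact k.isLt
    · intro k1 _ k2 _ h
      exact Fin.castLE_injective _ h
    · intro j hj
      rw [Finset.mem_Iio, Fin.lt_def] at hj
      exact ⟨⟨(j : ℕ), hj⟩, Finset.mem_univ _, rfl⟩
    · intro k _; rfl
  rw [h1, h2]
  apply Finset.sum_le_sum
  intro k _
  apply hg
  rw [Fin.le_def]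
  exact pd_strictMono_le (fun k => (((e k : {x // x ∈ U}) : Fin n) : ℕ))
    (fun a b hab => by
      have := e.strictMono hab
      exact this) k

private lemma pd_domsum {n : ℕ} (f : Fin n → ℝ) (A B : Finset (Fin n)) (hcard : A.card = B.card)
    (h : ∀ a ∈ A, ∀ b ∈ B, f a ≤ f b) : ∑ a ∈ A, f a ≤ ∑ b ∈ B, f b := by
  rcases A.eq_empty_or_nonempty with rfl | hA
  · have hB : B = ∅ := by
      rw [← Finset.card_eq_zero, ← hcard, Finset.card_empty]
    simp [hB]
  · have hB : B.Nonempty := Finset.card_pos.mp (hcard ▸ Finset.card_pos.mpr hA)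
    calc ∑ a ∈ A, f a ≤ A.card • (A.sup' hA f) :=
          Finset.sum_le_card_nsmul _ _ _ (fun x hx => Finset.le_sup' f hx)
      _ = B.card • (A.sup' hA f) := by rw [hcard]
      _ ≤ ∑ b ∈ B, f b :=
          Finset.card_nsmul_le_sum _ _ _
            (fun b hb => Finset.sup'_le hA f (fun a ha => h a ha b hb))

private lemma pd_sorted_ge {n : ℕ} (g : Fin n → ℝ) (τ : Equiv.Perm (Fin n))
    (hτ : ∀ a b : Fin n, a ≤ b → g (τ b) ≤ g (τ a)) (c : ℝ) (i : Fin n)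
    (hcard : (i : ℕ) + 1 ≤ (Finset.univ.filter (fun k => c ≤ g k)).card) :
    c ≤ g (τ i) := by
  classical
  set V := Finset.univ.filter (fun k => c ≤ g k) with hV
  set W := Finset.univ.filter (fun j => c ≤ g (τ j)) with hW
  have hWV : W.card = V.card := by
    have himg : W = V.image τ.symm := by
      ext j
      simp only [hW, hV, Finset.mem_filter, Finset.mem_univ, true_and, Finset.mem_image]
      constructor
      · intro hj; exact ⟨τ j, hj, by simp⟩
      · rintro ⟨k, hk, rfl⟩; simpa using hk
    rw [himg, Finset.card_image_of_injective _ τ.symm.injective]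
  by_contra hlt
  push_neg at hlt
  have hsub : W ⊆ Finset.Iio i := by
    intro j hj
    simp only [hW, Finset.mem_filter, Finset.mem_univ, true_and] at hj
    rw [Finset.mem_Iio]
    by_contra hij
    push_neg at hij
    exact absurd (le_trans hj (hτ i j hij)) (not_le.mpr hlt)
  have hle := Finset.card_le_card hsub
  rw [Fin.card_Iio] at hle
  omega

private lemma pd_card_filter {n : ℕ} (f : Fin n → ℝ) (ρ : Equiv.Perm (Fin n))
    (hρ : ∀ a b : Fin n, a ≤ b → f (ρ b) ≤ f (ρ a)) (c : ℝ) (i : Fin n)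
    (hci : c ≤ f (ρ i)) :
    (i : ℕ) + 1 ≤ (Finset.univ.filter (fun k => c ≤ f k)).card := by
  classical
  have hsub : (Finset.Iic i).image ρ ⊆ Finset.univ.filter (fun k => c ≤ f k) := by
    intro k hk
    simp only [Finset.mem_image, Finset.mem_Iic] at hk
    obtain ⟨j, hj, rfl⟩ := hk
    simp only [Finset.mem_filter, Finset.mem_univ, true_and]
    exact le_trans hci (hρ j i hj)
  have := Finset.card_le_card hsub
  rwa [Finset.card_image_of_injective _ ρ.injective, Fin.card_Iic] at this


/-- **Potential decrease.** Let `Δ`, `Δ'` be the surpluses of exchanges `x`, `x'`,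
sorted non-increasingly by permutations `σ`, `σ'`, and let `S` with `|S| < n`
satisfy (a) surpluses of `S` dominate those of `N∖S` in both exchanges,
(b) surpluses in `S` do not increase, and (c) `h₁ ≥ 2h₂/(nL/ε)²`, where
`h₁ = ∑_{i∈S}(Δ_i − Δ'_i)` and `h₂ = ∑_{i∉S} max(0, Δ'_i − Δ_i)`. Then the
sorted-surplus potential satisfies `P(x') ≤ P(x) − (h₁/2)·(nL/ε)²`. -/
theorem potential_decrease (n : ℕ) (hn : 0 < n) (L ε : ℝ) (hL : 0 < L)
    (hε : 0 < ε) (hratio : 1 < (n : ℝ) * L / ε)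
    (Δ Δ' : Fin n → ℝ)
    (σ σ' : Equiv.Perm (Fin n))
    (hσ : ∀ a b : Fin n, a ≤ b → Δ (σ b) ≤ Δ (σ a))
    (hσ' : ∀ a b : Fin n, a ≤ b → Δ' (σ' b) ≤ Δ' (σ' a))
    (S : Finset (Fin n)) (hScard : S.card < n)
    (hdom : ∀ i ∈ S, ∀ j ∉ S, Δ j ≤ Δ i ∧ Δ' j ≤ Δ' i)
    (hdec : ∀ i ∈ S, Δ' i ≤ Δ i)
    (hc : 2 * (∑ i ∈ Sᶜ, max 0 (Δ' i - Δ i)) / ((n : ℝ) * L / ε) ^ 2 ≤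
          ∑ i ∈ S, (Δ i - Δ' i)) :
    ∑ i : Fin n, ((n : ℝ) * L / ε) ^ (2 * (n - 1 - (i : ℕ))) * Δ' (σ' i) ≤
      (∑ i : Fin n, ((n : ℝ) * L / ε) ^ (2 * (n - 1 - (i : ℕ))) * Δ (σ i)) -
        (∑ i ∈ S, (Δ i - Δ' i)) / 2 * ((n : ℝ) * L / ε) ^ 2 := by
  classical
  set r : ℝ := (n : ℝ) * L / ε with hrdef
  have hr1 : (1 : ℝ) ≤ r := le_of_lt hratio
  have hr0 : (0 : ℝ) < r := lt_of_lt_of_le one_pos hr1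
  set s := S.card with hsdef
  have hsn : s < n := hScard
  set b : Fin n := ⟨s, hsn⟩ with hbdef
  set F : Finset (Fin n) := Finset.Iio b with hFdef
  have hFcard : F.card = s := by rw [hFdef]; simpa [hbdef] using Fin.card_Iio b
  set h₁ : ℝ := ∑ i ∈ S, (Δ i - Δ' i) with h1def
  set h₂ : ℝ := ∑ i ∈ Sᶜ, max 0 (Δ' i - Δ i) with h2def
  have h₂0 : 0 ≤ h₂ := Finset.sum_nonneg (fun i _ => le_max_left _ _)
  have h₁0 : 0 ≤ h₁ := le_trans (div_nonneg (by linarith) (by positivity)) hc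
  -- membership facts
  have hmemF : ∀ i : Fin n, i ∈ F ↔ (i : ℕ) < s := by
    intro i
    rw [hFdef, Finset.mem_Iio, Fin.lt_def, hbdef]
  -- K2: top-s sorted sums equal sums over S
  have key2 : ∀ (f : Fin n → ℝ) (ρ : Equiv.Perm (Fin n)),
      (∀ a b : Fin n, a ≤ b → f (ρ b) ≤ f (ρ a)) →
      (∀ i ∈ S, ∀ j ∉ S, f j ≤ f i) →
      ∑ i ∈ F, f (ρ i) = ∑ i ∈ S, f i := by
    intro f ρ hρ hd
    apply le_antisymm
    · have hsum : ∑ i ∈ F, f (ρ i) = ∑ j ∈ F.image ρ, f j :=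
        (Finset.sum_image (fun a _ c _ h => ρ.injective h)).symm
      rw [hsum]
      set T := F.image ρ with hTdef
      have hT : T.card = S.card := by
        rw [hTdef, Finset.card_image_of_injective _ ρ.injective, hFcard]
      have hdc : (T \ S).card = (S \ T).card := by
        have h1 := Finset.card_sdiff_add_card_inter T S
        have h2 := Finset.card_sdiff_add_card_inter S T
        rw [Finset.inter_comm] at h2
        omega
      have hdle : ∑ a ∈ T \ S, f a ≤ ∑ c ∈ S \ T, f c := by
        apply pd_domsum f _ _ hdc
        intro a ha c hcm
        exact hd c (Finset.mem_sdiff.mp hcm).1 a (Finset.mem_sdiff.mp ha).2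
      have e1 := Finset.sum_inter_add_sum_sdiff T S f
      have e2 := Finset.sum_inter_add_sum_sdiff S T f
      rw [Finset.inter_comm] at e2
      linarith
    · have hsum : ∑ i ∈ S, f i = ∑ j ∈ S.image ρ.symm, f (ρ j) := by
        rw [Finset.sum_image (fun a _ c _ h => ρ.symm.injective h)]
        exact Finset.sum_congr rfl (fun i _ => by rw [Equiv.apply_symm_apply])
      rw [hsum, hFdef]
      apply pd_topsum (fun j => f (ρ j)) hρ
      rw [Finset.card_image_of_injective _ ρ.symm.injective, hbdef]
  have hFa : ∑ i ∈ F, Δ (σ i) = ∑ i ∈ S, Δ i :=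
    key2 Δ σ hσ (fun i hi j hj => (hdom i hi j hj).1)
  have hFa' : ∑ i ∈ F, Δ' (σ' i) = ∑ i ∈ S, Δ' i :=
    key2 Δ' σ' hσ' (fun i hi j hj => (hdom i hi j hj).2)
  -- K1: sorted dominance on the top block
  have hK1 : ∀ i ∈ F, Δ' (σ' i) ≤ Δ (σ i) := by
    intro i hi
    have hival : (i : ℕ) < s := (hmemF i).mp hi
    set c := Δ' (σ' i) with hcdef
    have hcard' : (i : ℕ) + 1 ≤ (Finset.univ.filter (fun k => c ≤ Δ' k)).card :=
      pd_card_filter Δ' σ' hσ' c i le_rfl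
    have hcard : (i : ℕ) + 1 ≤ (Finset.univ.filter (fun k => c ≤ Δ k)).card := by
      by_cases hout : ∃ k, k ∉ S ∧ c ≤ Δ' k
      · obtain ⟨k, hkS, hk⟩ := hout
        have hSsub : S ⊆ Finset.univ.filter (fun j => c ≤ Δ j) := by
          intro j hj
          simp only [Finset.mem_filter, Finset.mem_univ, true_and]
          exact le_trans (le_trans hk (hdom j hj k hkS).2) (hdec j hj)
        have := Finset.card_le_card hSsub
        omega
      · push_neg at hout
        have hsub : Finset.univ.filter (fun k => c ≤ Δ' k) ⊆
            Finset.univ.filter (fun k => c ≤ Δ k) := by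
          intro k hk
          simp only [Finset.mem_filter, Finset.mem_univ, true_and] at hk ⊢
          by_cases hkS : k ∈ S
          · exact le_trans hk (hdec k hkS)
          · exact absurd hk (not_le.mpr (hout k hkS))
        exact le_trans hcard' (Finset.card_le_card hsub)
    exact pd_sorted_ge Δ σ hσ c i hcard
  -- K3 machinery
  set g : Fin n → ℝ := fun j => max (Δ j) (Δ' j) with hgdef
  set τ : Equiv.Perm (Fin n) := Tuple.sort (fun j => -g j) with hτdef
  have hτ : ∀ a c : Fin n, a ≤ c → g (τ c) ≤ g (τ a) := by
    intro a c hac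
    have := Tuple.monotone_sort (fun j => -g j) hac
    simp only [Function.comp_apply] at this
    rw [← hτdef] at this
    linarith
  have hca : ∀ i : Fin n, Δ (σ i) ≤ g (τ i) := by
    intro i
    apply pd_sorted_ge g τ hτ
    refine le_trans (pd_card_filter Δ σ hσ (Δ (σ i)) i le_rfl) (Finset.card_le_card ?_)
    intro k hk
    simp only [Finset.mem_filter, Finset.mem_univ, true_and] at hk ⊢
    exact le_trans hk (le_max_left _ _)
  have hca' : ∀ i : Fin n, Δ' (σ' i) ≤ g (τ i) := by
    intro i
    apply pd_sorted_ge g τ hτ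
    refine le_trans (pd_card_filter Δ' σ' hσ' (Δ' (σ' i)) i le_rfl) (Finset.card_le_card ?_)
    intro k hk
    simp only [Finset.mem_filter, Finset.mem_univ, true_and] at hk ⊢
    exact le_trans hk (le_max_right _ _)
  have hK3 : ∑ i ∈ Fᶜ, max 0 (Δ' (σ' i) - Δ (σ i)) ≤ h₂ := by
    have step1 : ∀ i : Fin n, max 0 (Δ' (σ' i) - Δ (σ i)) ≤ g (τ i) - Δ (σ i) := by
      intro i
      apply max_le
      · linarith [hca i]
      · linarith [hca' i]
    calc ∑ i ∈ Fᶜ, max 0 (Δ' (σ' i) - Δ (σ i))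
        ≤ ∑ i ∈ Fᶜ, (g (τ i) - Δ (σ i)) := Finset.sum_le_sum (fun i _ => step1 i)
      _ ≤ ∑ i : Fin n, (g (τ i) - Δ (σ i)) :=
          Finset.sum_le_sum_of_subset_of_nonneg (Finset.subset_univ _)
            (fun i _ _ => by linarith [hca i])
      _ = ∑ i : Fin n, g i - ∑ i : Fin n, Δ i := by
          rw [Finset.sum_sub_distrib]
          congr 1
          · exact Equiv.sum_comp τ g
          · exact Equiv.sum_comp σ Δ
      _ = ∑ i : Fin n, max 0 (Δ' i - Δ i) := by
          rw [← Finset.sum_sub_distrib]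
          apply Finset.sum_congr rfl
          intro i _
          show max (Δ i) (Δ' i) - Δ i = max 0 (Δ' i - Δ i)
          rcases le_total (Δ' i) (Δ i) with h | h
          · rw [max_eq_left h, max_eq_left (by linarith), sub_self]
          · rw [max_eq_right h, max_eq_right (by linarith)]
      _ = h₂ := by
          rw [h2def, ← Finset.sum_add_sum_compl S (fun i => max 0 (Δ' i - Δ i))]
          have hz : ∑ i ∈ S, max 0 (Δ' i - Δ i) = 0 :=
            Finset.sum_eq_zero (fun i hi => max_eq_left (by linarith [hdec i hi]))
          rw [hz, zero_add]
  -- weight bounds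
  have hwF : ∀ i ∈ F, r ^ (2 * (n - s)) ≤ r ^ (2 * (n - 1 - (i : ℕ))) := by
    intro i hi
    have hival : (i : ℕ) < s := (hmemF i).mp hi
    exact pow_le_pow_right₀ hr1 (by omega)
  have hwFc : ∀ i ∈ Fᶜ, r ^ (2 * (n - 1 - (i : ℕ))) ≤ r ^ (2 * (n - 1 - s)) := by
    intro i hi
    have hival : s ≤ (i : ℕ) := by
      rw [Finset.mem_compl] at hi
      have hnot : ¬ (i : ℕ) < s := fun h => hi ((hmemF i).mpr h)
      omega
    exact pow_le_pow_right₀ hr1 (by omega)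
  have hw0 : ∀ i : Fin n, (0:ℝ) < r ^ (2 * (n - 1 - (i : ℕ))) := fun i => pow_pos hr0 _
  -- Bound 1
  have h1F : h₁ = ∑ i ∈ F, (Δ (σ i) - Δ' (σ' i)) := by
    rw [h1def, Finset.sum_sub_distrib, ← hFa, ← hFa', ← Finset.sum_sub_distrib]
  have B1 : ∑ i ∈ F, r ^ (2 * (n - 1 - (i : ℕ))) * Δ' (σ' i) ≤
      ∑ i ∈ F, r ^ (2 * (n - 1 - (i : ℕ))) * Δ (σ i) - r ^ (2 * (n - s)) * h₁ := by
    have hmain : r ^ (2 * (n - s)) * h₁ ≤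
        ∑ i ∈ F, r ^ (2 * (n - 1 - (i : ℕ))) * (Δ (σ i) - Δ' (σ' i)) := by
      rw [h1F, Finset.mul_sum]
      apply Finset.sum_le_sum
      intro i hi
      exact mul_le_mul_of_nonneg_right (hwF i hi) (sub_nonneg.mpr (hK1 i hi))
    have hexp : ∑ i ∈ F, r ^ (2 * (n - 1 - (i : ℕ))) * (Δ (σ i) - Δ' (σ' i)) =
        ∑ i ∈ F, r ^ (2 * (n - 1 - (i : ℕ))) * Δ (σ i) -
        ∑ i ∈ F, r ^ (2 * (n - 1 - (i : ℕ))) * Δ' (σ' i) := by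
      rw [← Finset.sum_sub_distrib]
      exact Finset.sum_congr rfl (fun i _ => by ring)
    linarith
  -- Bound 2
  have B2 : ∑ i ∈ Fᶜ, r ^ (2 * (n - 1 - (i : ℕ))) * Δ' (σ' i) ≤
      ∑ i ∈ Fᶜ, r ^ (2 * (n - 1 - (i : ℕ))) * Δ (σ i) + r ^ (2 * (n - 1 - s)) * h₂ := by
    have key : ∑ i ∈ Fᶜ, (r ^ (2 * (n - 1 - (i : ℕ))) * Δ' (σ' i) -
        r ^ (2 * (n - 1 - (i : ℕ))) * Δ (σ i)) ≤ r ^ (2 * (n - 1 - s)) * h₂ := by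
      calc ∑ i ∈ Fᶜ, (r ^ (2 * (n - 1 - (i : ℕ))) * Δ' (σ' i) -
            r ^ (2 * (n - 1 - (i : ℕ))) * Δ (σ i))
          ≤ ∑ i ∈ Fᶜ, r ^ (2 * (n - 1 - s)) * max 0 (Δ' (σ' i) - Δ (σ i)) := by
            apply Finset.sum_le_sum
            intro i hi
            have e : r ^ (2 * (n - 1 - (i : ℕ))) * Δ' (σ' i) -
                r ^ (2 * (n - 1 - (i : ℕ))) * Δ (σ i) =
                r ^ (2 * (n - 1 - (i : ℕ))) * (Δ' (σ' i) - Δ (σ i)) := by ring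
            rw [e]
            calc r ^ (2 * (n - 1 - (i : ℕ))) * (Δ' (σ' i) - Δ (σ i))
                ≤ r ^ (2 * (n - 1 - (i : ℕ))) * max 0 (Δ' (σ' i) - Δ (σ i)) :=
                  mul_le_mul_of_nonneg_left (le_max_right _ _) (hw0 i).le
              _ ≤ r ^ (2 * (n - 1 - s)) * max 0 (Δ' (σ' i) - Δ (σ i)) :=
                  mul_le_mul_of_nonneg_right (hwFc i hi) (le_max_left _ _)
        _ = r ^ (2 * (n - 1 - s)) * ∑ i ∈ Fᶜ, max 0 (Δ' (σ' i) - Δ (σ i)) :=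
            (Finset.mul_sum _ _ _).symm
        _ ≤ r ^ (2 * (n - 1 - s)) * h₂ :=
            mul_le_mul_of_nonneg_left hK3 (pow_pos hr0 _).le
    have hexp : ∑ i ∈ Fᶜ, (r ^ (2 * (n - 1 - (i : ℕ))) * Δ' (σ' i) -
        r ^ (2 * (n - 1 - (i : ℕ))) * Δ (σ i)) =
        ∑ i ∈ Fᶜ, r ^ (2 * (n - 1 - (i : ℕ))) * Δ' (σ' i) -
        ∑ i ∈ Fᶜ, r ^ (2 * (n - 1 - (i : ℕ))) * Δ (σ i) := Finset.sum_sub_distrib _ _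
    linarith
  -- split sums over F and its complement
  have split1 : ∑ i : Fin n, r ^ (2 * (n - 1 - (i : ℕ))) * Δ' (σ' i) =
      ∑ i ∈ F, r ^ (2 * (n - 1 - (i : ℕ))) * Δ' (σ' i) +
      ∑ i ∈ Fᶜ, r ^ (2 * (n - 1 - (i : ℕ))) * Δ' (σ' i) :=
    (Finset.sum_add_sum_compl F _).symm
  have split2 : ∑ i : Fin n, r ^ (2 * (n - 1 - (i : ℕ))) * Δ (σ i) =
      ∑ i ∈ F, r ^ (2 * (n - 1 - (i : ℕ))) * Δ (σ i) +
      ∑ i ∈ Fᶜ, r ^ (2 * (n - 1 - (i : ℕ))) * Δ (σ i) :=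
    (Finset.sum_add_sum_compl F _).symm
  -- final arithmetic
  have hAW : r ^ (2 * (n - s)) = r ^ (2 * (n - 1 - s)) * r ^ 2 := by
    rw [← pow_add]
    congr 1
    omega
  have hge : r ^ 2 ≤ r ^ (2 * (n - s)) := pow_le_pow_right₀ hr1 (by omega)
  have hch₂ : h₂ ≤ h₁ * r ^ 2 / 2 := by
    have hr2 : (0:ℝ) < r ^ 2 := by positivity
    rw [div_le_iff₀ hr2] at hc
    linarith
  have t1 : r ^ (2 * (n - 1 - s)) * h₂ ≤ r ^ (2 * (n - 1 - s)) * (h₁ * r ^ 2 / 2) :=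
    mul_le_mul_of_nonneg_left hch₂ (pow_pos hr0 _).le
  have t2 : r ^ (2 * (n - 1 - s)) * (h₁ * r ^ 2 / 2) = r ^ (2 * (n - s)) * h₁ / 2 := by
    rw [hAW]; ring
  have t3 : h₁ / 2 * r ^ 2 ≤ r ^ (2 * (n - s)) * h₁ / 2 := by
    nlinarith [mul_le_mul_of_nonneg_left hge h₁0]
  rw [split1, split2]
  linarith [B1, B2, t1, t2, t3]
end
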